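/- Let G be a graph, H an induced 5-cycle in G with vertices v1,...,v5, and suppose every vertex outside H has either exactly two consecutive neighbors or exactly three pairwise nonconsecutive neighbors on H, G is K4-free, and for each i the set U_i of outside vertices adjacent to v_{i+2} and v_{i+3} satisfies U_1 = U_5 = ∅. Then every maximal independent set of G disjoint from V(H) contains at most 2 vertices, assuming additionally that G is {W5, fork}-free. -/

import Mathlib

open SimpleGraph

/-- `v` enumerates the vertices of an induced cycle of length `n` in `G`:
`v` is injective and two listed vertices are adjacent iff they are consecutive. -/
def IsInducedCycle {V : Type*} (G : SimpleGraph V) (n : ℕ) (v : ZMod n → V) : Prop :=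
  3 ≤ n ∧ Function.Injective v ∧
    ∀ i j : ZMod n, G.Adj (v i) (v j) ↔ (j = i + 1 ∨ i = j + 1)

/-- An odd hole: an induced odd cycle of length at least 5. -/
def IsOddHole {V : Type*} (G : SimpleGraph V) (n : ℕ) (v : ZMod n → V) : Prop :=
  5 ≤ n ∧ Odd n ∧ IsInducedCycle G n v

/-- `G` contains an induced fork (chair): the tree on `{c,x,y,z,w}` with
edges `cx, cy, cz, zw`. -/
def HasInducedFork {V : Type*} (G : SimpleGraph V) : Prop :=
  ∃ c x y z w : V, ([c, x, y, z, w] : List V).Nodup ∧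
    G.Adj c x ∧ G.Adj c y ∧ G.Adj c z ∧ G.Adj z w ∧
    ¬G.Adj x y ∧ ¬G.Adj x z ∧ ¬G.Adj y z ∧ ¬G.Adj c w ∧ ¬G.Adj x w ∧ ¬G.Adj y w

/-- `G` contains an induced claw `K_{1,3}`. -/
def HasInducedClaw {V : Type*} (G : SimpleGraph V) : Prop :=
  ∃ c x y z : V, ([c, x, y, z] : List V).Nodup ∧
    G.Adj c x ∧ G.Adj c y ∧ G.Adj c z ∧ ¬G.Adj x y ∧ ¬G.Adj x z ∧ ¬G.Adj y z

/-- `G` contains an induced `W₅`: an induced 5-cycle plus a vertex adjacent to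
all five cycle vertices. -/
def HasInducedW5 {V : Type*} (G : SimpleGraph V) : Prop :=
  ∃ (u : ZMod 5 → V) (h : V), Function.Injective u ∧ (∀ i, h ≠ u i) ∧
    (∀ i j : ZMod 5, G.Adj (u i) (u j) ↔ (j = i + 1 ∨ i = j + 1)) ∧
    ∀ i, G.Adj h (u i)

/-- `S` is an independent set of `G`. -/
def IsIS {V : Type*} (G : SimpleGraph V) (S : Set V) : Prop :=
  ∀ ⦃a⦄, a ∈ S → ∀ ⦃b⦄, b ∈ S → ¬G.Adj a b

/-- `S` is a maximal independent set of `G`. -/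
def MaxIS {V : Type*} (G : SimpleGraph V) (S : Set V) : Prop :=
  IsIS G S ∧ ∀ T, IsIS G T → S ⊆ T → T = S

/-- A vertex `u` outside an (induced) 5-cycle `v` has either exactly two consecutive
neighbors on the cycle, or exactly three neighbors that are not three consecutive
vertices (the only such pattern on a 5-cycle being `{i, i+1, i+3}`). -/
def GoodAttach {V : Type*} (G : SimpleGraph V) (v : ZMod 5 → V) (u : V) : Prop :=
  (∃ i : ZMod 5, ∀ k, G.Adj u (v k) ↔ (k = i ∨ k = i + 1)) ∨
  (∃ i : ZMod 5, ∀ k, G.Adj u (v k) ↔ (k = i ∨ k = i + 1 ∨ k = i + 3))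

/-- `U_i`: the vertices outside the 5-cycle adjacent to both `v_{i+2}` and `v_{i+3}`. -/
def Uset {V : Type*} (G : SimpleGraph V) (v : ZMod 5 → V) (i : ZMod 5) : Set V :=
  {u | u ∉ Set.range v ∧ G.Adj u (v (i + 2)) ∧ G.Adj u (v (i + 3))}

/-- `U_i⁺ = U_i ∩ N(v_i)`. -/
def UsetP {V : Type*} (G : SimpleGraph V) (v : ZMod 5 → V) (i : ZMod 5) : Set V :=
  {u | u ∈ Uset G v i ∧ G.Adj u (v i)}

/-- `U_i⁻ = U_i \ N(v_i)`. -/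
def UsetM {V : Type*} (G : SimpleGraph V) (v : ZMod 5 → V) (i : ZMod 5) : Set V :=
  {u | u ∈ Uset G v i ∧ ¬G.Adj u (v i)}

/-!
Since `S` is a maximal independent set missing the cycle, every `v i` has a neighbour in `S`.
Because `U₁ = U₅ = ∅`, a vertex of `S` attaches to the cycle in one of six ways, and the only one
containing `v₃` is `{v₀, v₁, v₃}`. So if `|S| ≥ 3`, take `u ∈ S` adjacent to `v₃`, `a ∈ S` adjacent
to `v₂` and a third `b ∈ S`: the graph induced on `H ∪ {u, a, b}` is determined by the attachment
types of `a` and `b`, and a finite check shows that it always contains an induced fork whose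
centre lies on the cycle.
-/

theorem hasInducedFork_of_adj {V : Type*} {G : SimpleGraph V} {c x y z w : V} (hxy : x ≠ y)
    (hcx : G.Adj c x) (hcy : G.Adj c y) (hcz : G.Adj c z) (hzw : G.Adj z w)
    (nxy : ¬G.Adj x y) (nxz : ¬G.Adj x z) (nyz : ¬G.Adj y z) (ncw : ¬G.Adj c w)
    (nxw : ¬G.Adj x w) (nyw : ¬G.Adj y w) : HasInducedFork G := by
  refine ⟨c, x, y, z, w, ?_, hcx, hcy, hcz, hzw, nxy, nxz, nyz, ncw, nxw, nyw⟩
  simp only [List.nodup_cons, List.mem_cons, List.not_mem_nil, or_false, not_or,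
    List.nodup_nil, not_false_eq_true, and_true]
  refine ⟨⟨hcx.ne, hcy.ne, hcz.ne, fun h => nxw (h ▸ hcx).symm⟩, ⟨hxy, ?_, ?_⟩, ⟨?_, ?_⟩, hzw.ne⟩
  · rintro rfl; exact nxw hzw
  · rintro rfl; exact ncw hcx
  · rintro rfl; exact nyw hzw
  · rintro rfl; exact ncw hcy

theorem MaxIS.exists_adj {V : Type*} {G : SimpleGraph V} {S : Set V} (hS : MaxIS G S) {x : V}
    (hx : x ∉ S) : ∃ y ∈ S, G.Adj y x := by
  by_contra! h
  have hins : IsIS G (insert x S) := by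
    rintro a (rfl | ha) b (rfl | hb)
    · exact G.loopless.irrefl _
    · exact fun hab => h b hb hab.symm
    · exact h a ha
    · exact hS.1 ha hb
  exact hx (hS.2 _ hins (Set.subset_insert x S) ▸ Set.mem_insert x S)

def IsCycleNbhd {V : Type*} (G : SimpleGraph V) (v : ZMod 5 → V) (x : V)
    (T : Finset (ZMod 5)) : Prop :=
  ∀ k, G.Adj x (v k) ↔ k ∈ T

/-- The attachments allowed by `GoodAttach` that avoid `{2, 3}` (`U₅`) and `{3, 4}` (`U₁`). -/
def attachTypes : List (Finset (ZMod 5)) :=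
  [{0, 1}, {1, 2}, {4, 0}, {0, 1, 3}, {1, 2, 4}, {2, 4, 0}]

/-- Fork centred at `v k` with leaves outside vertices of types `X`, `Y`, `Z`, and with the
cycle vertex `v j` hanging off the `Z`-vertex. -/
def OutsideClawFork (X Y Z : Finset (ZMod 5)) : Prop :=
  ∃ k j : ZMod 5, k ∈ X ∧ k ∈ Y ∧ k ∈ Z ∧ j ∉ X ∧ j ∉ Y ∧ j ∈ Z ∧ ¬(j = k + 1 ∨ k = j + 1)

/-- Fork centred at `v k` with leaves outside vertices of types `X`, `Y` and the cycle vertex `v m`,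
and with the cycle vertex `v j` hanging off the `Y`-vertex. -/
def MixedClawFork (X Y : Finset (ZMod 5)) : Prop :=
  ∃ k m j : ZMod 5, k ∈ X ∧ k ∈ Y ∧ m ∉ X ∧ m ∉ Y ∧ j ∉ X ∧ j ∈ Y ∧
    (m = k + 1 ∨ k = m + 1) ∧ ¬(j = k + 1 ∨ k = j + 1) ∧ ¬(j = m + 1 ∨ m = j + 1)

/-- Fork centred at `v k` with leaves its cycle neighbours `v m`, `v n` and an outside vertex of
type `X`, and with an outside vertex of type `Y` hanging off `v n`. -/
def CycleClawFork (X Y : Finset (ZMod 5)) : Prop :=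
  ∃ k m n : ZMod 5, k ∈ X ∧ m ∉ X ∧ n ∉ X ∧ n ∈ Y ∧ k ∉ Y ∧ m ∉ Y ∧
    (m = k + 1 ∨ k = m + 1) ∧ (n = k + 1 ∨ k = n + 1) ∧ ¬(n = m + 1 ∨ m = n + 1)

instance (X Y Z : Finset (ZMod 5)) : Decidable (OutsideClawFork X Y Z) := by
  unfold OutsideClawFork; infer_instance

instance (X Y : Finset (ZMod 5)) : Decidable (MixedClawFork X Y) := by
  unfold MixedClawFork; infer_instance

instance (X Y : Finset (ZMod 5)) : Decidable (CycleClawFork X Y) := by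
  unfold CycleClawFork; infer_instance

theorem eq_of_mem_attachTypes_of_three_mem :
    ∀ T ∈ attachTypes, 3 ∈ T → T = {0, 1, 3} := by
  decide

theorem exists_fork_pattern : ∀ A ∈ attachTypes, 2 ∈ A → ∀ B ∈ attachTypes,
    OutsideClawFork A B {0, 1, 3} ∨ OutsideClawFork {0, 1, 3} B A ∨
      MixedClawFork A B ∨ MixedClawFork B A ∨
      CycleClawFork {0, 1, 3} A ∨ CycleClawFork {0, 1, 3} B := by
  decide

section FiveCycle

variable {V : Type*} {G : SimpleGraph V} {v : ZMod 5 → V}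

theorem GoodAttach.exists_mem_attachTypes {x : V} (hx : GoodAttach G v x)
    (hxv : x ∉ Set.range v) (hU1 : Uset G v 1 = ∅) (hU5 : Uset G v 5 = ∅) :
    ∃ T ∈ attachTypes, IsCycleNbhd G v x T := by
  have h34 : ¬(G.Adj x (v 3) ∧ G.Adj x (v 4)) := fun h =>
    (Set.ext_iff.1 hU1 x).1 ⟨hxv, h⟩
  have h23 : ¬(G.Adj x (v 2) ∧ G.Adj x (v 3)) := fun h =>
    (Set.ext_iff.1 hU5 x).1 ⟨hxv, h⟩
  rcases hx with ⟨i, hi⟩ | ⟨i, hi⟩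
  · refine ⟨{i, i + 1}, ?_, fun k => by simp [hi]⟩
    simp only [hi] at h23 h34
    clear hi
    revert i
    decide
  · refine ⟨{i, i + 1, i + 3}, ?_, fun k => by simp [hi]⟩
    simp only [hi] at h23 h34
    clear hi
    revert i
    decide

variable {S : Set V} {x y z : V} {X Y Z : Finset (ZMod 5)}

theorem OutsideClawFork.hasInducedFork (hF : OutsideClawFork X Y Z) (hH : IsInducedCycle G 5 v)
    (hS : IsIS G S) (hx : x ∈ S) (hy : y ∈ S) (hz : z ∈ S) (hxy : x ≠ y)
    (hX : IsCycleNbhd G v x X) (hY : IsCycleNbhd G v y Y) (hZ : IsCycleNbhd G v z Z) :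
    HasInducedFork G := by
  obtain ⟨k, j, hkX, hkY, hkZ, hjX, hjY, hjZ, hkj⟩ := hF
  exact hasInducedFork_of_adj hxy ((hX k).2 hkX).symm ((hY k).2 hkY).symm ((hZ k).2 hkZ).symm
    ((hZ j).2 hjZ) (hS hx hy) (hS hx hz) (hS hy hz) (fun h => hkj ((hH.2.2 k j).1 h))
    (fun h => hjX ((hX j).1 h)) (fun h => hjY ((hY j).1 h))

theorem MixedClawFork.hasInducedFork (hF : MixedClawFork X Y) (hH : IsInducedCycle G 5 v)
    (hS : IsIS G S) (hSv : ∀ i, v i ∉ S) (hx : x ∈ S) (hy : y ∈ S)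
    (hX : IsCycleNbhd G v x X) (hY : IsCycleNbhd G v y Y) : HasInducedFork G := by
  obtain ⟨k, m, j, hkX, hkY, hmX, hmY, hjX, hjY, hkm, hkj, hmj⟩ := hF
  exact hasInducedFork_of_adj (fun h : x = v m => hSv m (h ▸ hx)) ((hX k).2 hkX).symm
    ((hH.2.2 k m).2 hkm) ((hY k).2 hkY).symm ((hY j).2 hjY) (fun h => hmX ((hX m).1 h))
    (hS hx hy) (fun h => hmY ((hY m).1 h.symm)) (fun h => hkj ((hH.2.2 k j).1 h))
    (fun h => hjX ((hX j).1 h)) (fun h => hmj ((hH.2.2 m j).1 h))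

theorem CycleClawFork.hasInducedFork (hF : CycleClawFork X Y) (hH : IsInducedCycle G 5 v)
    (hS : IsIS G S) (hSv : ∀ i, v i ∉ S) (hx : x ∈ S) (hy : y ∈ S)
    (hX : IsCycleNbhd G v x X) (hY : IsCycleNbhd G v y Y) : HasInducedFork G := by
  obtain ⟨k, m, n, hkX, hmX, hnX, hnY, hkY, hmY, hkm, hkn, hmn⟩ := hF
  exact hasInducedFork_of_adj (fun h : v m = x => hSv m (h ▸ hx)) ((hH.2.2 k m).2 hkm)
    ((hX k).2 hkX).symm ((hH.2.2 k n).2 hkn) ((hY n).2 hnY).symm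
    (fun h => hmX ((hX m).1 h.symm)) (fun h => hmn ((hH.2.2 m n).1 h))
    (fun h => hnX ((hX n).1 h)) (fun h => hkY ((hY k).1 h.symm)) (fun h => hmY ((hY m).1 h.symm))
    (hS hx hy)

end FiveCycle

theorem stmt15_general {V : Type*} (G : SimpleGraph V) (hfork : ¬HasInducedFork G)
    (v : ZMod 5 → V) (hH : IsInducedCycle G 5 v)
    (hstar : ∀ u : V, u ∉ Set.range v → GoodAttach G v u)
    (hU1 : Uset G v 1 = ∅) (hU5 : Uset G v 5 = ∅) :
    ∀ S : Set V, MaxIS G S → (∀ i, v i ∉ S) → S.ncard ≤ 2 := by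
  intro S hS hSv
  by_contra! hcard
  have htype x (hx : x ∈ S) : ∃ T ∈ attachTypes, IsCycleNbhd G v x T :=
    have hxv : x ∉ Set.range v := by rintro ⟨i, rfl⟩; exact hSv i hx
    (hstar x hxv).exists_mem_attachTypes hxv hU1 hU5
  obtain ⟨u, hu, hu3⟩ := hS.exists_adj (hSv 3)
  obtain ⟨a, ha, ha2⟩ := hS.exists_adj (hSv 2)
  obtain ⟨b, hb, hbua⟩ := Set.exists_mem_notMem_of_ncard_lt_ncard (s := {u, a})
    ((Set.ncard_insert_le u {a}).trans_lt (by simpa using hcard))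
  obtain ⟨hbu, hba⟩ : b ≠ u ∧ b ≠ a := by simpa [not_or] using hbua
  obtain ⟨U, hU, hUu⟩ := htype u hu
  obtain ⟨A, hA, hAa⟩ := htype a ha
  obtain ⟨B, hB, hBb⟩ := htype b hb
  obtain rfl := eq_of_mem_attachTypes_of_three_mem U hU ((hUu 3).1 hu3)
  refine hfork ?_
  rcases exists_fork_pattern A hA ((hAa 2).1 ha2) B hB with h | h | h | h | h | h
  exacts [h.hasInducedFork hH hS.1 ha hb hu hba.symm hAa hBb hUu,
    h.hasInducedFork hH hS.1 hu hb ha hbu.symm hUu hBb hAa,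
    h.hasInducedFork hH hS.1 hSv ha hb hAa hBb, h.hasInducedFork hH hS.1 hSv hb ha hBb hAa,
    h.hasInducedFork hH hS.1 hSv hu ha hUu hAa, h.hasInducedFork hH hS.1 hSv hu hb hUu hBb]

theorem stmt15 {V : Type*} (G : SimpleGraph V) (hK4 : G.CliqueFree 4)
    (hW5 : ¬HasInducedW5 G) (hfork : ¬HasInducedFork G)
    (v : ZMod 5 → V) (hH : IsInducedCycle G 5 v)
    (hstar : ∀ u : V, u ∉ Set.range v → GoodAttach G v u)
    (hU1 : Uset G v 1 = ∅) (hU5 : Uset G v 5 = ∅) :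
    ∀ S : Set V, MaxIS G S → (∀ i, v i ∉ S) → S.ncard ≤ 2 :=
  stmt15_general G hfork v hH hstar hU1 hU5
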